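/- arXiv:math/0407096 — 2 statements merged into one kernel-verified Lean document; each statement's English description precedes it below -/
import Mathlib

section
/- Let G be a group with a partial action on a set T, let X be a subset of G, and let R be a collection of relations (pairs of words over X ∪ X⁻¹) satisfied in G by the elements of X. Assume S is a discriminating subset of T and that, for each s ∈ S and each t in the G-orbit of s, a word w_t over X ∪ X⁻¹ is chosen so that t = s•w̄_t, where w̄_t is the evaluation of w_t in G. Then (X; R) is a presentation of G (that is, the canonical surjection from the group presented by (X; R) onto G is an isomorphism) if and only if, for all t, t' ∈ S•G and x ∈ X with t' = t•x (t•x defined), the words w_{t'} and w_t·x represent the same element of the group presented by (X; R). -/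
/-!
Since the points of `S` have trivial stabilizers, the evaluation `c t` of the chosen word `w t`
is a cocycle: `c (t • g) = c t * g`. Read in the presented group, the condition on the words says
that `t ↦ [w t]` is a cocycle along each generator, hence along every word `u` whose prefixes all
act at `t`. If `u` evaluates to `1` in `G`, starting it at a point of `S • G` where all its
prefixes act (`S` is discriminating) gives `[w t] = [w t] [u]`, so `[u] = 1`: `π` is injective.
For surjectivity, `g = c t⁻¹ * c (t • g)` for a point `t` of `S • G` at which `g` acts.
-/

/-- A partial (right) action of a group `G` on a set `T`. -/
structure PartialAction (G : Type*) (T : Type*) [Group G] where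
  act : T → G → Option T
  inj : ∀ (g : G) (t₁ t₂ u : T), act t₁ g = some u → act t₂ g = some u → t₁ = t₂
  pa1 : ∀ t : T, act t 1 = some t
  pa2 : ∀ (g h : G) (t t' : T), act t g = some t' → act t' h = act t (g * h)
  pa3 : ∀ L : List G, ∃ t : T, ∀ g ∈ L, (act t g).isSome

namespace PartialAction

variable {G T : Type*} [Group G]

/-- The set `S • G`. -/
def saturation (φ : PartialAction G T) (S : Set T) : Set T :=
  {t | ∃ s ∈ S, ∃ g : G, φ.act s g = some t}

variable {φ : PartialAction G T}

theorem act_mul_of_act {t t' t'' : T} {g h : G} (hg : φ.act t g = some t')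
    (hh : φ.act t' h = some t'') : φ.act t (g * h) = some t'' := by
  rw [← φ.pa2 g h t t' hg, hh]

theorem act_inv_of_act {t t' : T} {g : G} (hg : φ.act t g = some t') :
    φ.act t' g⁻¹ = some t := by
  rw [φ.pa2 g g⁻¹ t t' hg, mul_inv_cancel, φ.pa1]

theorem eq_of_act_eq_of_act_eq {s t : T} {a b : G} (hs : ∀ g, φ.act s g = some s → g = 1)
    (ha : φ.act s a = some t) (hb : φ.act s b = some t) : a = b :=
  mul_inv_eq_one.mp (hs _ (act_mul_of_act ha (act_inv_of_act hb)))

theorem act_mem_saturation {S : Set T} {t t' : T} {g : G} (ht : t ∈ φ.saturation S)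
    (hg : φ.act t g = some t') : t' ∈ φ.saturation S := by
  obtain ⟨s, hs, h, hh⟩ := ht
  exact ⟨s, hs, h * g, act_mul_of_act hh hg⟩

theorem eq_mul_of_act {S : Set T} (hS : ∀ s ∈ S, ∀ g : G, φ.act s g = some s → g = 1)
    {c : T → G} (hc : ∀ s ∈ S, ∀ t : T, (∃ g : G, φ.act s g = some t) → φ.act s (c t) = some t)
    {t t' : T} {g : G} (ht : t ∈ φ.saturation S) (hg : φ.act t g = some t') :
    c t' = c t * g := by
  obtain ⟨s, hs, h, hh⟩ := ht
  have hct := act_mul_of_act (hc s hs t ⟨h, hh⟩) hg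
  exact eq_of_act_eq_of_act_eq (hS s hs) (hc s hs t' ⟨_, hct⟩) hct

theorem apply_eq_mul_prod_of_act_prod {α H : Type*} [Monoid H] {S : Set T} {ρ : α → G}
    {ψ : α → H} {f : T → H}
    (hstep : ∀ a t t', t ∈ φ.saturation S → φ.act t (ρ a) = some t' → f t' = f t * ψ a) :
    ∀ (ℓ : List α) {t t' : T}, t ∈ φ.saturation S →
      (∀ p, p <+: ℓ → (φ.act t (p.map ρ).prod).isSome) →
      φ.act t (ℓ.map ρ).prod = some t' → f t' = f t * (ℓ.map ψ).prod
  | [], t, t', _, _, h => by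
    rw [List.map_nil, List.prod_nil, φ.pa1, Option.some_inj] at h
    rw [h, List.map_nil, List.prod_nil, mul_one]
  | a :: ℓ, t, t', ht, hpre, h => by
    obtain ⟨t₁, h₁⟩ := Option.isSome_iff_exists.mp (hpre [a] ⟨ℓ, rfl⟩)
    rw [List.map_singleton, List.prod_singleton] at h₁
    have hpre₁ : ∀ p, p <+: ℓ → (φ.act t₁ (p.map ρ).prod).isSome := fun p hp => by
      simpa [φ.pa2 _ _ t t₁ h₁] using hpre (a :: p) (List.cons_prefix_cons.mpr ⟨rfl, hp⟩)
    have h' : φ.act t₁ (ℓ.map ρ).prod = some t' := by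
      rwa [φ.pa2 _ _ t t₁ h₁, ← List.prod_cons, ← List.map_cons]
    rw [apply_eq_mul_prod_of_act_prod hstep ℓ (act_mem_saturation ht h₁) hpre₁ h',
      hstep a t t₁ ht h₁, List.map_cons, List.prod_cons, mul_assoc]

end PartialAction

theorem FreeGroup.mk_eq_prod_map_mk_singleton {α : Type*} (ℓ : List (α × Bool)) :
    FreeGroup.mk ℓ = (ℓ.map fun p => FreeGroup.mk [p]).prod := by
  induction ℓ with
  | nil => rfl
  | cons p ℓ ih => rw [List.map_cons, List.prod_cons, ← ih, FreeGroup.mul_mk]; rfl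

theorem FreeGroup.map_mk_eq_prod {α H : Type*} [Monoid H] (F : FreeGroup α →* H)
    (ℓ : List (α × Bool)) : F (FreeGroup.mk ℓ) = (ℓ.map fun p => F (FreeGroup.mk [p])).prod := by
  rw [FreeGroup.mk_eq_prod_map_mk_singleton, map_list_prod, List.map_map]
  rfl

theorem FreeGroup.mk_singleton_false {α : Type*} (x : α) :
    FreeGroup.mk [(x, false)] = (FreeGroup.of x)⁻¹ := by
  rw [FreeGroup.of, FreeGroup.inv_mk]
  rfl

section Presentation

open PartialAction

variable {G T : Type*} [Group G] {φ : PartialAction G T} {X : Set G} {N : Set (FreeGroup X)}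
  {S : Set T} {w : T → FreeGroup X}

theorem mk_word_eq_mul_mk_of_act_letter
    (H : ∀ t t', t ∈ φ.saturation S → t' ∈ φ.saturation S → ∀ x : X, φ.act t x.val = some t' →
      PresentedGroup.mk N (w t') = PresentedGroup.mk N (w t * FreeGroup.of x))
    (p : X × Bool) {t t' : T} (ht : t ∈ φ.saturation S)
    (h : φ.act t (FreeGroup.lift Subtype.val (FreeGroup.mk [p])) = some t') :
    PresentedGroup.mk N (w t') =
      PresentedGroup.mk N (w t) * PresentedGroup.mk N (FreeGroup.mk [p]) := by
  have ht' := act_mem_saturation ht h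
  obtain ⟨x, _ | _⟩ := p
  · rw [FreeGroup.mk_singleton_false, map_inv, FreeGroup.lift_apply_of] at h
    have h' := act_inv_of_act h
    rw [inv_inv] at h'
    rw [FreeGroup.mk_singleton_false, H t' t ht' ht x h', map_mul, map_inv, mul_inv_cancel_right]
  · change φ.act t (FreeGroup.lift Subtype.val (FreeGroup.of x)) = some t' at h
    rw [FreeGroup.lift_apply_of] at h
    exact (H t t' ht ht' x h).trans (map_mul _ _ _)

theorem mk_word_eq_mul_mk_of_act
    (H : ∀ t t', t ∈ φ.saturation S → t' ∈ φ.saturation S → ∀ x : X, φ.act t x.val = some t' →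
      PresentedGroup.mk N (w t') = PresentedGroup.mk N (w t * FreeGroup.of x))
    (ℓ : List (X × Bool)) {t t' : T} (ht : t ∈ φ.saturation S)
    (hpre : ∀ p, p <+: ℓ → (φ.act t (FreeGroup.lift Subtype.val (FreeGroup.mk p))).isSome)
    (h : φ.act t (FreeGroup.lift Subtype.val (FreeGroup.mk ℓ)) = some t') :
    PresentedGroup.mk N (w t') =
      PresentedGroup.mk N (w t) * PresentedGroup.mk N (FreeGroup.mk ℓ) := by
  rw [FreeGroup.map_mk_eq_prod] at h ⊢
  refine apply_eq_mul_prod_of_act_prod (fun p _ _ => mk_word_eq_mul_mk_of_act_letter H p) ℓ ht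
    (fun p hp => ?_) h
  rw [← FreeGroup.map_mk_eq_prod]
  exact hpre p hp

theorem injective_of_mk_word_eq {π : PresentedGroup N →* G}
    (hπ : ∀ u, π (PresentedGroup.mk N u) = FreeGroup.lift Subtype.val u)
    (hS : ∀ L : List G, ∃ t ∈ φ.saturation S, ∀ g ∈ L, (φ.act t g).isSome)
    (H : ∀ t t', t ∈ φ.saturation S → t' ∈ φ.saturation S → ∀ x : X, φ.act t x.val = some t' →
      PresentedGroup.mk N (w t') = PresentedGroup.mk N (w t * FreeGroup.of x)) :
    Function.Injective π := by
  classical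
  refine (injective_iff_map_eq_one π).mpr fun k hk => ?_
  obtain ⟨u, rfl⟩ := PresentedGroup.mk_surjective N k
  obtain ⟨t, ht, hdef⟩ :=
    hS (u.toWord.inits.map fun p => FreeGroup.lift Subtype.val (FreeGroup.mk p))
  have hloop : φ.act t (FreeGroup.lift Subtype.val (FreeGroup.mk u.toWord)) = some t := by
    rw [FreeGroup.mk_toWord, ← hπ, hk, φ.pa1]
  have hu := mk_word_eq_mul_mk_of_act H u.toWord ht
    (fun p hp => hdef _ (List.mem_map_of_mem ((List.mem_inits _ _).mpr hp))) hloop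
  rw [FreeGroup.mk_toWord] at hu
  exact mul_eq_left.mp hu.symm

theorem surjective_of_mk_word {π : PresentedGroup N →* G}
    (hπ : ∀ u, π (PresentedGroup.mk N u) = FreeGroup.lift Subtype.val u)
    (hS : ∀ L : List G, ∃ t ∈ φ.saturation S, ∀ g ∈ L, (φ.act t g).isSome)
    (hS' : ∀ s ∈ S, ∀ g : G, φ.act s g = some s → g = 1)
    (hw : ∀ s ∈ S, ∀ t : T, (∃ g : G, φ.act s g = some t) →
      φ.act s (FreeGroup.lift Subtype.val (w t)) = some t) :
    Function.Surjective π := by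
  intro g
  obtain ⟨t, ht, hdef⟩ := hS [g]
  obtain ⟨t', ht'⟩ := Option.isSome_iff_exists.mp (hdef g (List.mem_singleton_self g))
  refine ⟨(PresentedGroup.mk N (w t))⁻¹ * PresentedGroup.mk N (w t'), ?_⟩
  rw [map_mul, map_inv, hπ, hπ, eq_mul_of_act hS' hw ht ht', inv_mul_cancel_left]

end Presentation

theorem stmt2_general {G T : Type*} [Group G] (φ : PartialAction G T)
    (X : Set G) (R : Set (FreeGroup X × FreeGroup X))
    (S : Set T)
    -- `S` is discriminating:
    (hS1 : ∀ L : List G, ∃ t : T, (∃ s ∈ S, ∃ g : G, φ.act s g = some t) ∧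
      ∀ g ∈ L, (φ.act t g).isSome)
    (hS3 : ∀ s ∈ S, ∀ g : G, φ.act s g = some s → g = 1)
    -- chosen words `w t` with `t = s • (evaluation of w t)`:
    (w : T → FreeGroup X)
    (hw : ∀ s ∈ S, ∀ t : T, (∃ g : G, φ.act s g = some t) →
      φ.act s (FreeGroup.lift Subtype.val (w t)) = some t)
    -- the canonical surjection from the presented group onto `G`:
    (π : PresentedGroup {x : FreeGroup X | ∃ r ∈ R, x = r.1 * r.2⁻¹} →* G)
    (hπ : ∀ x : X, π (PresentedGroup.of x) = x.val) :
    Function.Bijective π ↔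
      (∀ t t' : T, (∃ s ∈ S, ∃ g : G, φ.act s g = some t) →
        (∃ s ∈ S, ∃ g : G, φ.act s g = some t') →
        ∀ x : X, φ.act t x.val = some t' →
          PresentedGroup.mk {x : FreeGroup X | ∃ r ∈ R, x = r.1 * r.2⁻¹} (w t') =
          PresentedGroup.mk {x : FreeGroup X | ∃ r ∈ R, x = r.1 * r.2⁻¹}
            (w t * FreeGroup.of x)) := by
  have hπmk : ∀ u, π (PresentedGroup.mk _ u) = FreeGroup.lift Subtype.val u :=
    DFunLike.congr_fun <| FreeGroup.ext_hom (π.comp (PresentedGroup.mk _)) _ fun x =>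
      (hπ x).trans FreeGroup.lift_apply_of.symm
  constructor
  · rintro ⟨hinj, -⟩ t t' ht - x hx
    apply hinj
    rw [hπmk, hπmk, PartialAction.eq_mul_of_act hS3 hw ht hx, map_mul, FreeGroup.lift_apply_of]
  · intro H
    exact ⟨injective_of_mk_word_eq hπmk hS1 H, surjective_of_mk_word hπmk hS1 hS3 hw⟩

/-- Proposition 1.4: given a partial action of `G` on `T`, a subset `X` of `G`,
a family `R` of relations (pairs of words in `X ∪ X⁻¹`, encoded as elements of the
free group on `X`) satisfied in `G`, a discriminating subset `S` of `T`, and for each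
`t` in `S • G` a chosen word `w t` connecting `t` to the element of `S` in its orbit,
the canonical surjection `π` from the group presented by `(X; R)` onto `G` is an
isomorphism if and only if `t' = t • x` implies that `w t'` and `(w t)·x` represent
the same element of the presented group. -/
theorem stmt2 {G T : Type*} [Group G] (φ : PartialAction G T)
    (X : Set G) (R : Set (FreeGroup X × FreeGroup X))
    (hR : ∀ r ∈ R, FreeGroup.lift Subtype.val r.1 = FreeGroup.lift Subtype.val r.2)
    (S : Set T)
    -- `S` is discriminating:
    (hS1 : ∀ L : List G, ∃ t : T, (∃ s ∈ S, ∃ g : G, φ.act s g = some t) ∧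
      ∀ g ∈ L, (φ.act t g).isSome)
    (hS2 : ∀ s ∈ S, ∀ s' ∈ S, (∃ g : G, φ.act s g = some s') → s = s')
    (hS3 : ∀ s ∈ S, ∀ g : G, φ.act s g = some s → g = 1)
    -- chosen words `w t` with `t = s • (evaluation of w t)`:
    (w : T → FreeGroup X)
    (hw : ∀ s ∈ S, ∀ t : T, (∃ g : G, φ.act s g = some t) →
      φ.act s (FreeGroup.lift Subtype.val (w t)) = some t)
    -- the canonical surjection from the presented group onto `G`:
    (π : PresentedGroup {x : FreeGroup X | ∃ r ∈ R, x = r.1 * r.2⁻¹} →* G)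
    (hπ : ∀ x : X, π (PresentedGroup.of x) = x.val) :
    Function.Bijective π ↔
      (∀ t t' : T, (∃ s ∈ S, ∃ g : G, φ.act s g = some t) →
        (∃ s ∈ S, ∃ g : G, φ.act s g = some t') →
        ∀ x : X, φ.act t x.val = some t' →
          PresentedGroup.mk {x : FreeGroup X | ∃ r ∈ R, x = r.1 * r.2⁻¹} (w t') =
          PresentedGroup.mk {x : FreeGroup X | ∃ r ∈ R, x = r.1 * r.2⁻¹}
            (w t * FreeGroup.of x)) :=
  stmt2_general φ X R S hS1 hS3 w hw π hπ
end

section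
/- The family {a_i : i ≥ 1}, where a_i is the class of the operator A_{1^{i−1}}, generates the geometry group G(A), and the relations a_i·a_{j−1} = a_j·a_i for all j ≥ i+2 make a presentation of G(A) in terms of these generators: the canonical homomorphism from the group presented by generators {a_i : i ≥ 1} and relations {a_i·a_{j−1} = a_j·a_i : j ≥ i+2} to G(A) is an isomorphism. -/
/-!
The relation `a_i·a_{j-1} = a_j·a_i` holds on the nose in the geometry monoid, being a lift of
`A·A_{1β} = A_{11β}·A`. The `a_i` generate: shifting by `1^k` the identities
`A_{0β}·A = A·A_{00β}`, `A_{10β}·A = A·A_{01β}` and the pentagon `A_1·A·A_0 = A·A` expresses every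
`A_α` through the `A_{1^k}`, and `A_α·A_α⁻¹` is near-equal to the identity.

For faithfulness, reversing `a_m·a_n⁻¹` with the relations writes every element of the presented
group as a left fraction `u⁻¹·v` of positive words, so it suffices that positive words inducing
near-equal operators are equal there. Evaluate both on a long right vine with distinct leaves. A
positive word acts by grouping neighbouring subtrees hanging off the right spine, and the groups
it builds persist. If both words reach the same tree, the caret `a·b` built by the first letter
`a_m` of one word is present in the final tree of the other; since overlapping carets `x·y`,
`y·z` cannot coexist in a tree with distinct leaves, that word can be rewritten, using only the
relations, to begin with `a_m` too, and induction on the length concludes.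
-/

/-- Coloured trees: finite rooted binary trees whose leaves are labelled by
positive integers. -/
inductive CTree : Type
  | leaf : ℕ+ → CTree
  | node : CTree → CTree → CTree

/-- Partial maps on coloured trees, as a monoid under reversed composition:
`(f * g) t = (f t).bind g`, i.e. `f * g` means "`f` then `g`". -/
abbrev PMap : Type := CTree → Option CTree

instance : Monoid PMap where
  one := fun t => some t
  mul f g := fun t => (f t).bind g
  mul_assoc f g h := by
    funext t
    show ((f t).bind g).bind h = (f t).bind fun u => (g u).bind h
    cases f t <;> rfl
  one_mul f := rfl
  mul_one f := by
    funext t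
    show (f t).bind some = f t
    cases f t <;> rfl

/-- The associativity operator `A`: maps `t₁·(t₂·t₃)` to `(t₁·t₂)·t₃`. -/
def opA : PMap
  | .node t₁ (.node t₂ t₃) => some (.node (.node t₁ t₂) t₃)
  | _ => none

/-- The inverse partial map of `A`: maps `(t₁·t₂)·t₃` to `t₁·(t₂·t₃)`. -/
def opAi : PMap
  | .node (.node t₁ t₂) t₃ => some (.node t₁ (.node t₂ t₃))
  | _ => none

/-- The commutativity operator `C`: maps `t₁·t₂` to `t₂·t₁` (its own inverse
as a partial map). -/
def opC : PMap
  | .node t₁ t₂ => some (.node t₂ t₁)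
  | _ => none

/-- The semi-commutativity operator `S`: maps `t₁·(t₂·t₃)` to `t₂·(t₁·t₃)`
(its own inverse as a partial map). -/
def opS : PMap
  | .node t₁ (.node t₂ t₃) => some (.node t₂ (.node t₁ t₃))
  | _ => none

/-- Addresses: finite words over `{0,1}`, with `false` = 0 (left) and `true` = 1
(right). -/
abbrev Addr := List Bool

/-- `applyAt α f` is the shifted operator `∂_α f`, applying `f` to the
`α`-subtree of its argument. -/
def applyAt : Addr → PMap → PMap
  | [], f => f
  | false :: α, f => fun t => match t with
      | .node t₁ t₂ => (applyAt α f t₁).map (fun s => .node s t₂)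
      | _ => none
  | true :: α, f => fun t => match t with
      | .node t₁ t₂ => (applyAt α f t₂).map (fun s => .node t₁ s)
      | _ => none

/-- Two partial maps are near-equal if they are both defined on at least one common
element, and they agree wherever both are defined. -/
def NearEq (f g : PMap) : Prop :=
  (∃ t, (f t).isSome ∧ (g t).isSome) ∧
  ∀ t, (f t).isSome → (g t).isSome → f t = g t

/-- The generators of the geometry monoid of associativity: the operators `A_α`
and their inverse partial maps. -/
def genA : Set PMap := {f | ∃ α : Addr, f = applyAt α opA ∨ f = applyAt α opAi}

/-- The geometry monoid `𝒢(A)` of associativity. -/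
def GeoA : Submonoid PMap := Submonoid.closure genA

/-- The operator `a_{n+1} = A_{1^n}` (indices are shifted by one: the generator of
index `n : ℕ` is `a_{n+1}`). -/
def opa (n : ℕ) : PMap := applyAt (List.replicate n true) opA

theorem mema (n : ℕ) : opa n ∈ GeoA :=
  Submonoid.subset_closure ⟨List.replicate n true, Or.inl rfl⟩

/-- The relations `a_i·a_{j-1} = a_j·a_i` for `j ≥ i+2`, as relators in the free
group on generators indexed by `ℕ` (index `n` standing for `a_{n+1}`): with
`i = n+1` and `j = i+2+k`, the relator is
`a_i·a_{j-1}·(a_j·a_i)⁻¹ = of n · of (n+1+k) · (of (n+2+k) · of n)⁻¹`. -/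
def relsa : Set (FreeGroup ℕ) :=
  {x | ∃ n k : ℕ, x = FreeGroup.of n * FreeGroup.of (n + 1 + k) *
      (FreeGroup.of (n + 2 + k) * FreeGroup.of n)⁻¹}

open CTree

theorem PMap.mul_apply (f g : PMap) (t : CTree) : (f * g) t = (f t).bind g := rfl

@[simp] theorem applyAt_nil (f : PMap) : applyAt [] f = f := rfl

@[simp] theorem applyAt_false_node (α : Addr) (f : PMap) (t₁ t₂ : CTree) :
    applyAt (false :: α) f (node t₁ t₂) = (applyAt α f t₁).map (node · t₂) := rfl

@[simp] theorem applyAt_true_node (α : Addr) (f : PMap) (t₁ t₂ : CTree) :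
    applyAt (true :: α) f (node t₁ t₂) = (applyAt α f t₂).map (node t₁ ·) := rfl

@[simp] theorem applyAt_cons_leaf (b : Bool) (α : Addr) (f : PMap) (c : ℕ+) :
    applyAt (b :: α) f (leaf c) = none := by
  cases b <;> rfl

theorem applyAt_append (γ δ : Addr) (f : PMap) :
    applyAt (γ ++ δ) f = applyAt γ (applyAt δ f) := by
  induction γ with
  | nil => rfl
  | cons b γ ih => cases b <;> funext t <;> cases t <;> simp [ih]

theorem applyAt_mul (γ : Addr) (f g : PMap) :
    applyAt γ (f * g) = applyAt γ f * applyAt γ g := by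
  induction γ with
  | nil => rfl
  | cons b γ ih =>
    cases b <;> funext t <;> cases t <;>
      simp only [applyAt_false_node, applyAt_true_node, applyAt_cons_leaf, PMap.mul_apply, ih,
        Option.map_bind, Option.bind_map] <;> rfl

theorem applyAt_zero_mul_opA (β : Addr) :
    applyAt (false :: β) opA * opA = opA * applyAt (false :: false :: β) opA := by
  funext t
  rcases t with _ | ⟨t₁, _ | ⟨t₂, t₃⟩⟩ <;> simp [PMap.mul_apply, opA, Option.map_map]
  cases applyAt β opA _ <;> rfl

theorem applyAt_one_zero_mul_opA (β : Addr) :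
    applyAt (true :: false :: β) opA * opA = opA * applyAt (false :: true :: β) opA := by
  funext t
  rcases t with _ | ⟨t₁, _ | ⟨t₂, t₃⟩⟩ <;> simp [PMap.mul_apply, opA, Option.map_map]
  cases applyAt β opA _ <;> rfl

theorem opA_mul_applyAt_one (β : Addr) :
    opA * applyAt (true :: β) opA = applyAt (true :: true :: β) opA * opA := by
  funext t
  rcases t with _ | ⟨t₁, _ | ⟨t₂, t₃⟩⟩ <;> simp [PMap.mul_apply, opA, Option.map_map]
  cases applyAt β opA _ <;> rfl

theorem opA_pentagon : applyAt [true] opA * opA * applyAt [false] opA = opA * opA := by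
  funext t
  rcases t with _ | ⟨t₁, _ | ⟨t₂, _ | ⟨t₃, t₄⟩⟩⟩ <;> rfl

theorem applyAt_opA_mem (α : Addr) : applyAt α opA ∈ GeoA :=
  Submonoid.subset_closure ⟨α, Or.inl rfl⟩

theorem applyAt_opAi_mem (α : Addr) : applyAt α opAi ∈ GeoA :=
  Submonoid.subset_closure ⟨α, Or.inr rfl⟩

def assocAt (α : Addr) : GeoA := ⟨applyAt α opA, applyAt_opA_mem α⟩

def assocInvAt (α : Addr) : GeoA := ⟨applyAt α opAi, applyAt_opAi_mem α⟩

theorem opa_add (k n : ℕ) : opa (k + n) = applyAt (List.replicate k true) (opa n) := by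
  rw [opa, List.replicate_add, applyAt_append, opa]

theorem opa_mul_opa (i e : ℕ) : opa i * opa (i + 1 + e) = opa (i + 2 + e) * opa i := by
  rw [add_assoc, add_assoc, opa_add i (1 + e), opa_add i (2 + e), opa, ← applyAt_mul,
    ← applyAt_mul, add_comm 1, add_comm 2]
  exact congrArg _ (opA_mul_applyAt_one _)

def graft : Addr → CTree → CTree
  | [], s => s
  | false :: γ, s => node (graft γ s) (leaf 1)
  | true :: γ, s => node (leaf 1) (graft γ s)

theorem applyAt_graft (γ : Addr) (f : PMap) (s : CTree) :
    applyAt γ f (graft γ s) = (f s).map (graft γ) := by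
  induction γ with
  | nil => simp [graft]
  | cons b γ ih => cases b <;> simp [graft, ih, Option.map_map, Function.comp_def]

theorem applyAt_opAi_of_applyAt_opA {γ : Addr} {t w : CTree} (h : applyAt γ opA t = some w) :
    applyAt γ opAi w = some t := by
  induction γ generalizing t w with
  | nil =>
    rcases t with _ | ⟨_, _ | ⟨_, _⟩⟩ <;> cases h
    rfl
  | cons b γ ih =>
    rcases t with _ | ⟨t₁, t₂⟩
    · simp at h
    · cases b <;>
      · simp only [applyAt_false_node, applyAt_true_node, Option.map_eq_some_iff] at h
        obtain ⟨s, hs, rfl⟩ := h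
        simp [ih hs]

theorem nearEq_applyAt_opA_mul_opAi (γ : Addr) :
    NearEq (applyAt γ opA * applyAt γ opAi) 1 := by
  have hdef : applyAt γ opA (graft γ (node (leaf 1) (node (leaf 1) (leaf 1)))) =
      some (graft γ (node (node (leaf 1) (leaf 1)) (leaf 1))) := by
    rw [applyAt_graft]; rfl
  refine ⟨⟨graft γ (node (leaf 1) (node (leaf 1) (leaf 1))), ?_, rfl⟩, fun t ht _ => ?_⟩
  · rw [PMap.mul_apply, hdef, Option.bind_some, applyAt_opAi_of_applyAt_opA hdef]
    rfl
  · obtain ⟨w, hw, -⟩ := Option.bind_eq_some_iff.mp (Option.isSome_iff_exists.mp ht).choose_spec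
    rw [PMap.mul_apply, hw, Option.bind_some, applyAt_opAi_of_applyAt_opA hw]
    rfl

section Generation

variable {G : Type*} [Group G] (q : GeoA →* G)

theorem map_assocAt_append_zero_zero (γ β : Addr) :
    q (assocAt (γ ++ false :: false :: β)) =
      (q (assocAt γ))⁻¹ * q (assocAt (γ ++ false :: β)) * q (assocAt γ) := by
  have h : assocAt (γ ++ false :: β) * assocAt γ = assocAt γ * assocAt (γ ++ false :: false :: β) :=
    Subtype.ext <| by
      simp only [assocAt, Submonoid.coe_mul, applyAt_append, ← applyAt_mul, applyAt_zero_mul_opA]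
  rw [mul_assoc, ← map_mul, h, map_mul, inv_mul_cancel_left]

theorem map_assocAt_append_zero_one (γ β : Addr) :
    q (assocAt (γ ++ false :: true :: β)) =
      (q (assocAt γ))⁻¹ * q (assocAt (γ ++ true :: false :: β)) * q (assocAt γ) := by
  have h : assocAt (γ ++ true :: false :: β) * assocAt γ =
      assocAt γ * assocAt (γ ++ false :: true :: β) :=
    Subtype.ext <| by
      simp only [assocAt, Submonoid.coe_mul, applyAt_append, ← applyAt_mul,
        applyAt_one_zero_mul_opA]
  rw [mul_assoc, ← map_mul, h, map_mul, inv_mul_cancel_left]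

theorem map_assocAt_append_zero (γ : Addr) :
    q (assocAt (γ ++ [false])) =
      (q (assocAt γ))⁻¹ * (q (assocAt (γ ++ [true])))⁻¹ * (q (assocAt γ) * q (assocAt γ)) := by
  have h : assocAt (γ ++ [true]) * assocAt γ * assocAt (γ ++ [false]) = assocAt γ * assocAt γ :=
    Subtype.ext <| by
      simp only [assocAt, Submonoid.coe_mul, applyAt_append, ← applyAt_mul, opA_pentagon]
  rw [← map_mul, ← h, map_mul, map_mul]
  group

theorem map_assocAt_mem_closure_opa :
    ∀ (α : Addr) (k : ℕ), q (assocAt (List.replicate k true ++ α)) ∈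
      Subgroup.closure (Set.range fun n : ℕ => q ⟨opa n, mema n⟩)
  | [], k => Subgroup.subset_closure ⟨k, by rw [List.append_nil]; rfl⟩
  | true :: δ, k => by
    have h := map_assocAt_mem_closure_opa δ (k + 1)
    rwa [List.replicate_succ', List.append_assoc] at h
  | [false], k => by
    have ha : ∀ n, q (assocAt (List.replicate n true)) ∈
        Subgroup.closure (Set.range fun n : ℕ => q ⟨opa n, mema n⟩) :=
      fun n => Subgroup.subset_closure ⟨n, rfl⟩
    rw [map_assocAt_append_zero, ← List.replicate_succ']
    exact mul_mem (mul_mem (inv_mem (ha k)) (inv_mem (ha (k + 1)))) (mul_mem (ha k) (ha k))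
  | false :: false :: ε, k => by
    rw [map_assocAt_append_zero_zero]
    exact mul_mem (mul_mem (inv_mem (Subgroup.subset_closure ⟨k, rfl⟩))
      (map_assocAt_mem_closure_opa (false :: ε) k)) (Subgroup.subset_closure ⟨k, rfl⟩)
  | false :: true :: ε, k => by
    rw [map_assocAt_append_zero_one]
    have h := map_assocAt_mem_closure_opa (false :: ε) (k + 1)
    rw [List.replicate_succ', List.append_assoc] at h
    exact mul_mem (mul_mem (inv_mem (Subgroup.subset_closure ⟨k, rfl⟩)) h)
      (Subgroup.subset_closure ⟨k, rfl⟩)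

theorem map_assocInvAt (hq : ∀ f g : GeoA, NearEq f.1 g.1 → q f = q g) (γ : Addr) :
    q (assocInvAt γ) = (q (assocAt γ))⁻¹ := by
  refine eq_inv_of_mul_eq_one_right ?_
  rw [← map_mul, ← map_one q]
  exact hq _ 1 (nearEq_applyAt_opA_mul_opAi γ)

theorem closure_range_opa_eq_top (hsurj : Function.Surjective q)
    (hq : ∀ f g : GeoA, NearEq f.1 g.1 → q f = q g) :
    Subgroup.closure (Set.range fun n : ℕ => q ⟨opa n, mema n⟩) = ⊤ := by
  refine eq_top_iff.mpr ?_
  rintro g -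
  obtain ⟨⟨f, hf⟩, rfl⟩ := hsurj g
  have hA : ∀ α, q (assocAt α) ∈ Subgroup.closure (Set.range fun n : ℕ => q ⟨opa n, mema n⟩) :=
    fun α => map_assocAt_mem_closure_opa q α 0
  induction hf using Submonoid.closure_induction with
  | mem f hf =>
    obtain ⟨α, rfl | rfl⟩ := hf
    · exact hA α
    · exact (map_assocInvAt q hq α).symm ▸ inv_mem (hA α)
  | one => exact (map_one q).symm ▸ one_mem _
  | mul f g hf hg ihf ihg => exact (map_mul q ⟨f, hf⟩ ⟨g, hg⟩).symm ▸ mul_mem ihf ihg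

end Generation

namespace CTree

def leaves : CTree → List ℕ+
  | leaf c => [c]
  | node t₁ t₂ => leaves t₁ ++ leaves t₂

@[simp] theorem leaves_leaf (c : ℕ+) : leaves (leaf c) = [c] := rfl

@[simp] theorem leaves_node (t₁ t₂ : CTree) : leaves (node t₁ t₂) = leaves t₁ ++ leaves t₂ := rfl

theorem exists_mem_leaves : ∀ t : CTree, ∃ c, c ∈ leaves t
  | leaf c => ⟨c, List.mem_singleton_self c⟩
  | node t₁ _ => (exists_mem_leaves t₁).imp fun _ h => List.mem_append_left _ h

inductive IsSub : CTree → CTree → Prop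
  | refl (t : CTree) : IsSub t t
  | left {s l r : CTree} : IsSub s l → IsSub s (node l r)
  | right {s l r : CTree} : IsSub s r → IsSub s (node l r)

namespace IsSub

theorem trans {a b c : CTree} (h₁ : IsSub a b) (h₂ : IsSub b c) : IsSub a c := by
  induction h₂ with
  | refl => exact h₁
  | left _ ih => exact .left ih
  | right _ ih => exact .right ih

theorem leaves_sublist {s t : CTree} (h : IsSub s t) : (leaves s).Sublist (leaves t) := by
  induction h with
  | refl => exact .refl _
  | left _ ih => exact ih.trans (List.sublist_append_left _ _)
  | right _ ih => exact ih.trans (List.sublist_append_right _ _)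

theorem nodup_leaves {s t : CTree} (h : IsSub s t) (ht : (leaves t).Nodup) :
    (leaves s).Nodup :=
  ht.sublist h.leaves_sublist

theorem nested {T s₁ s₂ : CTree} (hT : (leaves T).Nodup) (h₁ : IsSub s₁ T) (h₂ : IsSub s₂ T)
    {c : ℕ+} (hc₁ : c ∈ leaves s₁) (hc₂ : c ∈ leaves s₂) : IsSub s₁ s₂ ∨ IsSub s₂ s₁ := by
  induction T with
  | leaf => cases h₁; cases h₂; exact .inl (.refl _)
  | node l r ihl ihr =>
    obtain ⟨hl, hr, hlr⟩ := List.nodup_append.mp hT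
    cases h₁ with
    | refl => exact .inr h₂
    | left h₁ =>
      cases h₂ with
      | refl => exact .inl h₁.left
      | left h₂ => exact ihl hl h₁ h₂
      | right h₂ =>
        exact absurd rfl (hlr c (h₁.leaves_sublist.subset hc₁) c (h₂.leaves_sublist.subset hc₂))
    | right h₁ =>
      cases h₂ with
      | refl => exact .inl h₁.right
      | left h₂ =>
        exact absurd rfl (hlr c (h₂.leaves_sublist.subset hc₂) c (h₁.leaves_sublist.subset hc₁))
      | right h₂ => exact ihr hr h₁ h₂

theorem not_node_of_node {T x y z : CTree} (hT : (leaves T).Nodup)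
    (hxyz : (leaves x ++ leaves y ++ leaves z).Nodup) (hxy : IsSub (node x y) T) :
    ¬ IsSub (node y z) T := by
  intro hyz
  obtain ⟨hxy_nd, -, hxy_z⟩ := List.nodup_append.mp hxyz
  obtain ⟨-, -, hx_y⟩ := List.nodup_append.mp hxy_nd
  obtain ⟨c, hc⟩ := exists_mem_leaves y
  rcases nested hT hxy hyz (List.mem_append_right _ hc) (List.mem_append_left _ hc) with h | h
  · obtain ⟨d, hd⟩ := exists_mem_leaves x
    rcases List.mem_append.mp (h.leaves_sublist.subset (List.mem_append_left _ hd)) with hd' | hd'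
    · exact hx_y d hd d hd' rfl
    · exact hxy_z d (by simp [hd]) d hd' rfl
  · obtain ⟨d, hd⟩ := exists_mem_leaves z
    exact hxy_z d (h.leaves_sublist.subset (List.mem_append_right _ hd)) d hd rfl

end IsSub

def spineAt : ℕ → CTree → Option CTree
  | 0, t => some t
  | _ + 1, leaf _ => none
  | m + 1, node _ t₂ => spineAt m t₂

def spineLength : CTree → ℕ
  | leaf _ => 0
  | node _ t₂ => spineLength t₂ + 1

inductive OffSpine (s : CTree) : CTree → Prop
  | here {c z : CTree} : IsSub s c → OffSpine s (node c z)
  | there {c z : CTree} : OffSpine s z → OffSpine s (node c z)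

@[simp] theorem spineAt_succ_node (m : ℕ) (t₁ t₂ : CTree) :
    spineAt (m + 1) (node t₁ t₂) = spineAt m t₂ := rfl

@[simp] theorem spineAt_succ_leaf (m : ℕ) (c : ℕ+) : spineAt (m + 1) (leaf c) = none := rfl

theorem isSub_of_spineAt {m : ℕ} {t s : CTree} (h : spineAt m t = some s) : IsSub s t := by
  induction m generalizing t with
  | zero => cases h; exact .refl _
  | succ m ih =>
    cases t with
    | leaf => simp at h
    | node => exact .right (ih h)

theorem spineAt_succ_of_spineAt {m : ℕ} {t c z : CTree} (h : spineAt m t = some (node c z)) :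
    spineAt (m + 1) t = some z := by
  induction m generalizing t with
  | zero => cases h; rfl
  | succ m ih =>
    cases t with
    | leaf => simp at h
    | node => exact ih h

theorem offSpine_of_spineAt {m : ℕ} {t c z : CTree} (h : spineAt m t = some (node c z)) :
    OffSpine c t := by
  induction m generalizing t with
  | zero => cases h; exact .here (.refl _)
  | succ m ih =>
    cases t with
    | leaf => simp at h
    | node => exact .there (ih h)

theorem OffSpine.isSub {s t : CTree} (h : OffSpine s t) : IsSub s t := by
  induction h with
  | here h => exact .left h
  | there _ ih => exact .right ih

end CTree

theorem opa_succ_node (n : ℕ) (t₁ t₂ : CTree) :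
    opa (n + 1) (node t₁ t₂) = (opa n t₂).map (node t₁ ·) := rfl

theorem opa_zero_eq_some {t t' : CTree} :
    opa 0 t = some t' ↔ ∃ a b r, t = node a (node b r) ∧ t' = node (node a b) r := by
  constructor
  · intro h
    rcases t with _ | ⟨a, _ | ⟨b, r⟩⟩ <;> cases h
    exact ⟨a, b, r, rfl, rfl⟩
  · rintro ⟨a, b, r, rfl, rfl⟩
    rfl

theorem opa_succ_eq_some {n : ℕ} {t t' : CTree} :
    opa (n + 1) t = some t' ↔
      ∃ t₁ t₂ t₂', t = node t₁ t₂ ∧ opa n t₂ = some t₂' ∧ t' = node t₁ t₂' := by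
  constructor
  · intro h
    rcases t with _ | ⟨t₁, t₂⟩
    · cases h
    · obtain ⟨t₂', h₂, rfl⟩ := Option.map_eq_some_iff.mp h
      exact ⟨t₁, t₂, t₂', rfl, h₂, rfl⟩
  · rintro ⟨t₁, t₂, t₂', rfl, h, rfl⟩
    exact Option.map_eq_some_iff.mpr ⟨t₂', h, rfl⟩

theorem spineAt_of_opa {m : ℕ} {t t' : CTree} (h : opa m t = some t') :
    ∃ a b r, spineAt m t = some (node a (node b r)) ∧ spineAt m t' = some (node (node a b) r) := by
  induction m generalizing t t' with
  | zero =>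
    obtain ⟨a, b, r, rfl, rfl⟩ := opa_zero_eq_some.mp h
    exact ⟨a, b, r, rfl, rfl⟩
  | succ m ih =>
    obtain ⟨t₁, t₂, t₂', rfl, h₂, rfl⟩ := opa_succ_eq_some.mp h
    exact ih h₂

theorem leaves_of_opa {m : ℕ} {t t' : CTree} (h : opa m t = some t') : leaves t' = leaves t := by
  induction m generalizing t t' with
  | zero =>
    obtain ⟨a, b, r, rfl, rfl⟩ := opa_zero_eq_some.mp h
    simp
  | succ m ih =>
    obtain ⟨t₁, t₂, t₂', rfl, h₂, rfl⟩ := opa_succ_eq_some.mp h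
    simp [ih h₂]

theorem spineLength_of_opa {m : ℕ} {t t' : CTree} (h : opa m t = some t') :
    spineLength t' + 1 = spineLength t := by
  induction m generalizing t t' with
  | zero =>
    obtain ⟨a, b, r, rfl, rfl⟩ := opa_zero_eq_some.mp h
    rfl
  | succ m ih =>
    obtain ⟨t₁, t₂, t₂', rfl, h₂, rfl⟩ := opa_succ_eq_some.mp h
    simp [spineLength, ← ih h₂]

theorem opa_isSome {n : ℕ} {t : CTree} (h : n + 2 ≤ spineLength t) : (opa n t).isSome := by
  induction n generalizing t with
  | zero =>
    rcases t with _ | ⟨_, _ | ⟨_, _⟩⟩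
    · simp [spineLength] at h
    · simp [spineLength] at h
    · rfl
  | succ n ih =>
    rcases t with _ | ⟨t₁, t₂⟩
    · simp [spineLength] at h
    · rw [opa_succ_node, Option.isSome_map]
      exact ih (by simp [spineLength] at h; omega)

theorem CTree.OffSpine.of_opa {n : ℕ} {s t t' : CTree} (h : opa n t = some t') (hs : OffSpine s t) :
    OffSpine s t' := by
  induction n generalizing t t' with
  | zero =>
    obtain ⟨a, b, r, rfl, rfl⟩ := opa_zero_eq_some.mp h
    rcases hs with hs | hs | hs
    · exact .here hs.left
    · exact .here hs.right
    · exact .there hs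
  | succ n ih =>
    obtain ⟨t₁, t₂, t₂', rfl, h₂, rfl⟩ := opa_succ_eq_some.mp h
    rcases hs with hs | hs
    · exact .here hs
    · exact .there (ih h₂ hs)

theorem spineAt_of_opa_of_lt {n : ℕ} {t t' : CTree} (h : opa n t = some t') (j : ℕ) :
    spineAt (n + 2 + j) t = spineAt (n + 1 + j) t' := by
  induction n generalizing t t' with
  | zero =>
    obtain ⟨a, b, r, rfl, rfl⟩ := opa_zero_eq_some.mp h
    simp [add_comm _ j]
  | succ n ih =>
    obtain ⟨t₁, t₂, t₂', rfl, h₂, rfl⟩ := opa_succ_eq_some.mp h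
    simpa [add_right_comm _ 1] using ih h₂

theorem spineAt_of_opa_of_gt {m e : ℕ} {t t' a b r : CTree}
    (hm : spineAt m t = some (node a (node b r))) (h : opa (m + 2 + e) t = some t') :
    ∃ r', spineAt m t' = some (node a (node b r')) := by
  induction m generalizing t t' with
  | zero =>
    cases hm
    rw [show 0 + 2 + e = e + 1 + 1 by omega] at h
    obtain ⟨-, -, x, ⟨⟩, h₂, rfl⟩ := opa_succ_eq_some.mp h
    obtain ⟨-, -, y, ⟨⟩, -, rfl⟩ := opa_succ_eq_some.mp h₂
    exact ⟨y, rfl⟩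
  | succ m ih =>
    rw [show m + 1 + 2 + e = m + 2 + e + 1 by omega] at h
    obtain ⟨t₁, t₂, t₂', rfl, h₂, rfl⟩ := opa_succ_eq_some.mp h
    exact ih hm h₂

def word (u : List ℕ) : PMap := (u.map opa).prod

theorem word_mem (u : List ℕ) : word u ∈ GeoA :=
  Submonoid.list_prod_mem _ fun _ hf => by
    obtain ⟨n, -, rfl⟩ := List.mem_map.mp hf
    exact mema n

theorem word_cons_apply (n : ℕ) (u : List ℕ) (t : CTree) :
    word (n :: u) t = (opa n t).bind (word u) := rfl

theorem word_cons_eq_some {n : ℕ} {u : List ℕ} {t T : CTree} :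
    word (n :: u) t = some T ↔ ∃ t', opa n t = some t' ∧ word u t' = some T :=
  Option.bind_eq_some_iff

theorem word_swap (i e : ℕ) (u : List ℕ) :
    word (i :: (i + 1 + e) :: u) = word ((i + 2 + e) :: i :: u) := by
  simp only [word, List.map_cons, List.prod_cons, ← mul_assoc, opa_mul_opa]

theorem word_induction {P : CTree → Prop} (hP : ∀ n t t', opa n t = some t' → P t → P t')
    {u : List ℕ} {t T : CTree} (h : word u t = some T) (ht : P t) : P T := by
  induction u generalizing t with
  | nil => cases h; exact ht
  | cons n u ih =>
    obtain ⟨t', h₁, h₂⟩ := word_cons_eq_some.mp h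
    exact ih h₂ (hP n t t' h₁ ht)

theorem leaves_of_word {u : List ℕ} {t T : CTree} (h : word u t = some T) :
    leaves T = leaves t :=
  word_induction (P := fun s => leaves s = leaves t)
    (fun _ _ _ h' hs => (leaves_of_opa h').trans hs) h rfl

theorem CTree.OffSpine.of_word {u : List ℕ} {s t T : CTree} (h : word u t = some T)
    (hs : OffSpine s t) : OffSpine s T :=
  word_induction (fun _ _ _ => OffSpine.of_opa) h hs

theorem spineLength_of_word {u : List ℕ} {t T : CTree} (h : word u t = some T) :
    spineLength T + u.length = spineLength t := by
  induction u generalizing t with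
  | nil => cases h; rfl
  | cons n u ih =>
    obtain ⟨t', h₁, h₂⟩ := word_cons_eq_some.mp h
    rw [List.length_cons, ← add_assoc, ih h₂, spineLength_of_opa h₁]

theorem exists_word_eq_some {u : List ℕ} {t : CTree}
    (h : (u.map (· + 2)).sum ≤ spineLength t) : ∃ T, word u t = some T := by
  induction u generalizing t with
  | nil => exact ⟨t, rfl⟩
  | cons n u ih =>
    rw [List.map_cons, List.sum_cons] at h
    obtain ⟨t', h₁⟩ := Option.isSome_iff_exists.mp (opa_isSome (le_of_add_le_left h))
    have := spineLength_of_opa h₁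
    obtain ⟨T, hT⟩ := ih (t := t') (by omega)
    exact ⟨T, word_cons_eq_some.mpr ⟨t', h₁, hT⟩⟩

namespace CTree

def vine : ℕ → CTree
  | 0 => leaf 1
  | n + 1 => node (leaf (n + 1).succPNat) (vine n)

theorem spineLength_vine (n : ℕ) : spineLength (vine n) = n := by
  induction n with
  | zero => rfl
  | succ n ih => simp [vine, spineLength, ih]

theorem le_of_mem_leaves_vine {n : ℕ} {c : ℕ+} (h : c ∈ leaves (vine n)) : (c : ℕ) ≤ n + 1 := by
  induction n with
  | zero => simp [vine] at h; simp [h]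
  | succ n ih =>
    simp only [vine, leaves_node, leaves_leaf, List.singleton_append, List.mem_cons] at h
    rcases h with rfl | h
    · simp
    · exact (ih h).trans (n + 1).le_succ

theorem nodup_leaves_vine (n : ℕ) : (leaves (vine n)).Nodup := by
  induction n with
  | zero => exact List.nodup_singleton _
  | succ n ih =>
    refine List.nodup_cons.mpr ⟨fun h => ?_, ih⟩
    have := le_of_mem_leaves_vine h
    simp at this

end CTree

namespace PresentedGroup

theorem of_mul_of_relsa {a b : ℕ} (h : a < b) :
    (of a : PresentedGroup relsa) * of b = of (b + 1) * of a := by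
  have hrel : FreeGroup.of a * FreeGroup.of b * (FreeGroup.of (b + 1) * FreeGroup.of a)⁻¹ ∈ relsa :=
    ⟨a, b - a - 1, by
      rw [show a + 1 + (b - a - 1) = b by omega, show a + 2 + (b - a - 1) = b + 1 by omega]⟩
  have h1 := mk_eq_mk_of_mul_inv_mem hrel
  rwa [map_mul, map_mul] at h1

def posWord (u : List ℕ) : PresentedGroup relsa := (u.map of).prod

@[simp] theorem posWord_nil : posWord [] = 1 := rfl

theorem posWord_cons (n : ℕ) (u : List ℕ) : posWord (n :: u) = of n * posWord u := rfl

theorem posWord_swap (i e : ℕ) (u : List ℕ) :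
    posWord (i :: (i + 1 + e) :: u) = posWord ((i + 2 + e) :: i :: u) := by
  rw [posWord_cons, posWord_cons, ← mul_assoc, of_mul_of_relsa (by omega), add_right_comm,
    mul_assoc, posWord_cons, posWord_cons]

theorem of_mul_inv_of (m n : ℕ) :
    (of m : PresentedGroup relsa) * (of n)⁻¹ = 1 ∨
      ∃ m' n', (of m : PresentedGroup relsa) * (of n)⁻¹ = (of n')⁻¹ * of m' := by
  rcases lt_trichotomy m n with h | rfl | h
  · refine .inr ⟨m, n + 1, ?_⟩
    rw [eq_inv_mul_iff_mul_eq, ← mul_assoc, ← of_mul_of_relsa h, mul_inv_cancel_right]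
  · exact .inl (mul_inv_cancel _)
  · refine .inr ⟨m + 1, n, ?_⟩
    rw [eq_inv_mul_iff_mul_eq, ← mul_assoc, of_mul_of_relsa h, mul_inv_cancel_right]

theorem posWord_mul_inv_of (v : List ℕ) (n : ℕ) :
    (∃ b, posWord v * (of n)⁻¹ = posWord b) ∨
      ∃ n' b, posWord v * (of n)⁻¹ = (of n')⁻¹ * posWord b := by
  induction v with
  | nil => exact .inr ⟨n, [], by simp⟩
  | cons m v ih =>
    rcases ih with ⟨b, hb⟩ | ⟨n', b, hb⟩
    · exact .inl ⟨m :: b, by rw [posWord_cons, mul_assoc, hb, posWord_cons]⟩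
    · rcases of_mul_inv_of m n' with h | ⟨m', n'', h⟩
      · exact .inl ⟨b, by rw [posWord_cons, mul_assoc, hb, ← mul_assoc, h, one_mul]⟩
      · exact .inr ⟨n'', m' :: b, by
          rw [posWord_cons, mul_assoc, hb, ← mul_assoc, h, mul_assoc, posWord_cons]⟩

theorem exists_eq_inv_posWord_mul_posWord (g : PresentedGroup relsa) :
    ∃ a b, g = (posWord a)⁻¹ * posWord b := by
  have hg : g ∈ Subgroup.closure (Set.range of) := by
    rw [closure_range_of]
    trivial
  induction hg using Subgroup.closure_induction_right with
  | one => exact ⟨[], [], by simp⟩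
  | mul_right x _ y hy ih =>
    obtain ⟨n, rfl⟩ := hy
    obtain ⟨a, b, rfl⟩ := ih
    exact ⟨a, b ++ [n], by simp [posWord, mul_assoc]⟩
  | mul_inv_cancel x _ y hy ih =>
    obtain ⟨n, rfl⟩ := hy
    obtain ⟨a, b, rfl⟩ := ih
    rcases posWord_mul_inv_of b n with ⟨b', hb'⟩ | ⟨n', b', hb'⟩
    · exact ⟨a, b', by rw [mul_assoc, hb']⟩
    · exact ⟨n' :: a, b', by rw [mul_assoc, hb', posWord_cons, mul_inv_rev, mul_assoc]⟩

end PresentedGroup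

theorem not_isSub_of_spineAt {m : ℕ} {t a b r : CTree} (ht : (leaves t).Nodup)
    (hm : spineAt m t = some (node a (node b r))) : ¬ IsSub (node a b) t := by
  have h := isSub_of_spineAt hm
  refine fun hab => IsSub.not_node_of_node ht ?_ hab (IsSub.right (.refl _) |>.trans h)
  simpa [List.append_assoc] using h.nodup_leaves ht

theorem exists_offSpine_of_opa_of_spineAt_succ {n : ℕ} {t t' a b r : CTree}
    (ht : (leaves t).Nodup) (h : opa n t = some t')
    (hm : spineAt (n + 1) t = some (node a (node b r))) :
    ∃ x, OffSpine (node x a) t' ∧ (leaves x ++ leaves a ++ leaves b).Nodup := by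
  obtain ⟨x, y, z, hs, hs'⟩ := spineAt_of_opa h
  obtain ⟨rfl, rfl⟩ : y = a ∧ z = node b r := by simpa [spineAt_succ_of_spineAt hs] using hm
  refine ⟨x, offSpine_of_spineAt hs', ?_⟩
  have := (isSub_of_spineAt hs).nodup_leaves ht
  simp only [leaves_node, List.append_assoc] at this ⊢
  exact this.sublist (by simp)

theorem exists_offSpine_of_opa_succ_of_spineAt {m : ℕ} {t t' a b r : CTree}
    (ht : (leaves t).Nodup) (h : opa (m + 1) t = some t')
    (hm : spineAt m t = some (node a (node b r))) :
    ∃ z, OffSpine (node b z) t' ∧ (leaves a ++ leaves b ++ leaves z).Nodup := by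
  obtain ⟨x, y, z, hs, hs'⟩ := spineAt_of_opa h
  obtain ⟨rfl, rfl⟩ : x = b ∧ node y z = r := by simpa [spineAt_succ_of_spineAt hm] using hs.symm
  refine ⟨y, offSpine_of_spineAt hs', ?_⟩
  have := (isSub_of_spineAt hm).nodup_leaves ht
  simp only [leaves_node, List.append_assoc] at this ⊢
  exact this.sublist (by simp)

open PresentedGroup

/-- `node a b` is the caret that `a_m` creates at `t`. -/
theorem exists_word_cons_of_isSub {u : List ℕ} {m : ℕ} {t T a b r : CTree}
    (ht : (leaves t).Nodup) (hu : word u t = some T)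
    (hm : spineAt m t = some (node a (node b r))) (hab : IsSub (node a b) T) :
    ∃ u', word (m :: u') t = some T ∧ posWord u = of m * posWord u' := by
  induction u generalizing t m r with
  | nil =>
    cases hu
    exact absurd hab (not_isSub_of_spineAt ht hm)
  | cons n u ih =>
    obtain ⟨t', h₁, h₂⟩ := word_cons_eq_some.mp hu
    have ht' : (leaves t').Nodup := leaves_of_opa h₁ ▸ ht
    have hT : (leaves T).Nodup := leaves_of_word h₂ ▸ ht'
    obtain h | rfl | rfl | rfl | h :
        n + 2 ≤ m ∨ m = n + 1 ∨ n = m ∨ n = m + 1 ∨ m + 2 ≤ n := by omega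
    · obtain ⟨e, rfl⟩ : ∃ e, m = n + 2 + e := ⟨m - n - 2, by omega⟩
      obtain ⟨u', h₃, hpos⟩ := ih ht' h₂ (spineAt_of_opa_of_lt h₁ e ▸ hm)
      refine ⟨n :: u', ?_, ?_⟩
      · rw [← word_swap, word_cons_apply, h₁]
        exact h₃
      · rw [posWord_cons, hpos, ← posWord_cons, ← posWord_cons, posWord_swap, posWord_cons]
    · obtain ⟨x, hx, hxab⟩ := exists_offSpine_of_opa_of_spineAt_succ ht h₁ hm
      exact absurd hab (IsSub.not_node_of_node hT hxab (hx.of_word h₂).isSub)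
    · exact ⟨u, hu, rfl⟩
    · obtain ⟨z, hz, habz⟩ := exists_offSpine_of_opa_succ_of_spineAt ht h₁ hm
      exact absurd (hz.of_word h₂).isSub (IsSub.not_node_of_node hT habz hab)
    · obtain ⟨e, rfl⟩ : ∃ e, n = m + 2 + e := ⟨n - m - 2, by omega⟩
      obtain ⟨r', hm'⟩ := spineAt_of_opa_of_gt hm h₁
      obtain ⟨u', h₃, hpos⟩ := ih ht' h₂ hm'
      refine ⟨(m + 1 + e) :: u', ?_, ?_⟩
      · rw [word_swap, word_cons_apply, h₁]
        exact h₃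
      · rw [posWord_cons, hpos, ← posWord_cons, ← posWord_cons, ← posWord_swap, posWord_cons]

theorem posWord_eq_of_word_eq {u v : List ℕ} {t T : CTree} (ht : (leaves t).Nodup)
    (hu : word u t = some T) (hv : word v t = some T) : posWord u = posWord v := by
  induction v generalizing u t with
  | nil =>
    cases hv
    have := spineLength_of_word hu
    rw [List.length_eq_zero_iff.mp (by omega : u.length = 0)]
  | cons m v ih =>
    obtain ⟨t', hm, hv'⟩ := word_cons_eq_some.mp hv
    obtain ⟨a, b, r, hs, hs'⟩ := spineAt_of_opa hm
    have hab : IsSub (node a b) T := ((offSpine_of_spineAt hs').of_word hv').isSub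
    obtain ⟨u', hu', hpos⟩ := exists_word_cons_of_isSub ht hu hs hab
    rw [word_cons_apply, hm, Option.bind_some] at hu'
    rw [hpos, posWord_cons, ih (leaves_of_opa hm ▸ ht) hu' hv']

theorem posWord_eq_of_nearEq {u v : List ℕ} (h : NearEq (word u) (word v)) :
    posWord u = posWord v := by
  set N := (u.map (· + 2)).sum + (v.map (· + 2)).sum
  obtain ⟨Tu, hu⟩ := exists_word_eq_some (u := u) (t := vine N) (by rw [spineLength_vine]; omega)
  obtain ⟨Tv, hv⟩ := exists_word_eq_some (u := v) (t := vine N) (by rw [spineLength_vine]; omega)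
  have huv := h.2 (vine N) (by simp [hu]) (by simp [hv])
  exact posWord_eq_of_word_eq (nodup_leaves_vine N) hu (huv ▸ hu)

section Presentation

variable {G : Type*} [Group G] (q : GeoA →* G)

theorem lift_opa_relsa_eq_one :
    ∀ r ∈ relsa, FreeGroup.lift (fun n => q ⟨opa n, mema n⟩) r = 1 := by
  rintro r ⟨n, k, rfl⟩
  rw [map_mul, map_mul, map_inv, map_mul, mul_inv_eq_one]
  simp only [FreeGroup.lift_apply_of, ← map_mul]
  exact congrArg q (Subtype.ext (opa_mul_opa n k))

theorem toGroup_posWord (u : List ℕ) :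
    toGroup (lift_opa_relsa_eq_one q) (posWord u) = q ⟨word u, word_mem u⟩ := by
  induction u with
  | nil => exact (map_one q).symm
  | cons n u ih =>
    rw [posWord_cons, map_mul, toGroup.of, ih, ← map_mul]
    rfl

theorem injective_toGroup_lift_opa (hq : ∀ f g : GeoA, q f = q g → NearEq f.1 g.1) :
    Function.Injective (toGroup (lift_opa_relsa_eq_one q)) := by
  refine (injective_iff_map_eq_one _).mpr fun g hg => ?_
  obtain ⟨a, b, rfl⟩ := exists_eq_inv_posWord_mul_posWord g
  rw [map_mul, map_inv, inv_mul_eq_one, toGroup_posWord, toGroup_posWord] at hg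
  rw [posWord_eq_of_nearEq (hq _ _ hg), inv_mul_cancel]

end Presentation

/-- Proposition 2.14: the family `a` generates the geometry group `G(A)` — i.e. any
group `G` obtained from the geometry monoid `𝒢(A)` by identifying near-equal
elements — and the relations `a_i·a_{j-1} = a_j·a_i` (`j ≥ i+2`) make a presentation
of `G(A)` in terms of these generators. -/
theorem stmt10 (G : Type*) [Group G] (q : GeoA →* G)
    (hsurj : Function.Surjective q)
    (hiff : ∀ f g : GeoA, q f = q g ↔ NearEq f.1 g.1) :
    Subgroup.closure (Set.range fun n : ℕ => q ⟨opa n, mema n⟩) = ⊤ ∧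
    ∃ iso : PresentedGroup relsa ≃* G,
      ∀ n : ℕ, iso (PresentedGroup.of n) = q ⟨opa n, mema n⟩ := by
  have hgen := closure_range_opa_eq_top q hsurj fun f g => (hiff f g).mpr
  set φ := toGroup (lift_opa_relsa_eq_one q)
  have hφ : ∀ n, φ (of n) = q ⟨opa n, mema n⟩ := fun n => toGroup.of _
  have hφsurj : Function.Surjective φ := by
    rw [← MonoidHom.range_eq_top, eq_top_iff, ← hgen, Subgroup.closure_le]
    rintro _ ⟨n, rfl⟩
    exact ⟨of n, hφ n⟩
  have hφinj := injective_toGroup_lift_opa q fun f g => (hiff f g).mp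
  exact ⟨hgen, MulEquiv.ofBijective φ ⟨hφinj, hφsurj⟩, hφ⟩
end
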